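/- The relation ≻ is well-founded on the set of weakly beta-normalizing lambda-terms, where s ≻ t holds if either s has head-redex form and s head-beta-reduces to t, or s = λx⃗. v a_0 a_1 … a_n with v a variable or constant, n ≥ 1, and t = a_i for some i. -/

import Mathlib

namespace CondConf

/-- Untyped lambda-terms with constants from `F`, in de Bruijn notation. -/
inductive Tm (F : Type) : Type
  | const : F → Tm F
  | var   : ℕ → Tm F
  | app   : Tm F → Tm F → Tm F
  | lam   : Tm F → Tm F

namespace Tm

variable {F : Type}

/-- Lift (shift) free de Bruijn indices `≥ d` by one. -/
def lift (d : ℕ) : Tm F → Tm F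
  | const f => const f
  | var n   => if n < d then var n else var (n + 1)
  | app s t => app (lift d s) (lift d t)
  | lam s   => lam (lift (d + 1) s)

/-- Capture-avoiding substitution `t[k := u]` (de Bruijn). -/
def subst : Tm F → ℕ → Tm F → Tm F
  | const f, _, _ => const f
  | var n, k, u   => if n = k then u else if k < n then var (n - 1) else var n
  | app s t, k, u => app (subst s k u) (subst t k u)
  | lam s, k, u   => lam (subst s (k + 1) (lift 0 u))

end Tm

/-- Capture-avoiding application of a substitution `σ` to a term. -/
def applySubst {F : Type} (σ : ℕ → Tm F) : Tm F → Tm F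
  | .const f => .const f
  | .var n   => σ n
  | .app s t => .app (applySubst σ s) (applySubst σ t)
  | .lam s   => .lam (applySubst (fun n => match n with
      | 0 => Tm.var 0
      | m + 1 => Tm.lift 0 (σ m)) s)

/-- One-step beta-reduction. -/
inductive Beta {F : Type} : Tm F → Tm F → Prop
  | beta (s t : Tm F) : Beta (Tm.app (Tm.lam s) t) (Tm.subst s 0 t)
  | appL {s s'} (t) : Beta s s' → Beta (Tm.app s t) (Tm.app s' t)
  | appR (s) {t t'} : Beta t t' → Beta (Tm.app s t) (Tm.app s t')
  | lam {s s'} : Beta s s' → Beta (Tm.lam s) (Tm.lam s')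

/-- Tait–Martin-Löf parallel beta-reduction. -/
inductive PB {F : Type} : Tm F → Tm F → Prop
  | refl (t : Tm F) : PB t t
  | lam {s s'} : PB s s' → PB (Tm.lam s) (Tm.lam s')
  | app {s s' t t'} : PB s s' → PB t t' → PB (Tm.app s t) (Tm.app s' t')
  | beta {s s' t t'} : PB s s' → PB t t' →
      PB (Tm.app (Tm.lam s) t) (Tm.subst s' 0 t')


/-- One-step head beta-reduction: contracts the head redex
`λx⃗.(λy.b) a₀ a⃗ →h λx⃗.b[y:=a₀] a⃗`. -/
inductive Head {F : Type} : Tm F → Tm F → Prop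
  | beta (s t : Tm F) : Head (Tm.app (Tm.lam s) t) (Tm.subst s 0 t)
  | app {s s'} (t) : Head s s' → (∀ b : Tm F, s ≠ Tm.lam b) →
      Head (Tm.app s t) (Tm.app s' t)
  | lam {s s'} : Head s s' → Head (Tm.lam s) (Tm.lam s')

/-- Head of the application spine. -/
def spineHead {F : Type} : Tm F → Tm F
  | .app s _ => spineHead s
  | t => t

/-- Arguments of the application spine. -/
def spineArgs {F : Type} : Tm F → List (Tm F)
  | .app s t => spineArgs s ++ [t]
  | _ => []

/-- Strip the outer abstractions `λx⃗`. -/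
def stripLam {F : Type} : Tm F → Tm F
  | .lam s => stripLam s
  | t => t

/-- `t'` is obtained from `t` by renaming its (de Bruijn) variables; this
accounts for the fact that the free variables of an argument may be bound in
the surrounding term (e.g. `λx. f x ≻ y` for every variable `y`). -/
def Renaming {F : Type} (t t' : Tm F) : Prop :=
  ∃ ρ : ℕ → ℕ, t' = applySubst (fun n => Tm.var (ρ n)) t

/-- The relation `≻`: either a head beta-step, or passing (up to renaming of
variables) to one of the arguments `aᵢ` of `s = λx⃗. v a₀ … aₙ` where the head
`v` is a variable or a constant and there is at least one argument. -/
inductive Succ {F : Type} : Tm F → Tm F → Prop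
  | head {s t : Tm F} : Head s t → Succ s t
  | arg {s a t : Tm F} :
      ((∃ n : ℕ, spineHead (stripLam s) = Tm.var n) ∨
        (∃ f : F, spineHead (stripLam s) = Tm.const f)) →
      a ∈ spineArgs (stripLam s) →
      1 ≤ (spineArgs (stripLam s)).length →
      Renaming a t → Succ s t

/-- Beta-normal forms. -/
def BetaNF {F : Type} (t : Tm F) : Prop := ∀ u : Tm F, ¬ Beta t u

/-- Weakly beta-normalizing terms: terms having a beta-normal form. -/
def WN {F : Type} (s : Tm F) : Prop :=
  ∃ t : Tm F, Relation.ReflTransGen Beta s t ∧ BetaNF t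

/-!
Weakly normalizing terms are hereditarily head-normalizing (`HeredHN`): head reduction reaches
a head normal form `λx⃗. v a₀ … aₙ` whose arguments are again hereditarily head-normalizing.
Beta-normal forms clearly are, and the property is closed under beta-expansion by Takahashi's
standardization argument: a parallel step factors into head steps followed by an internal
parallel step, and an internal step followed by a head step can be rearranged into head steps
followed by a parallel step. Induction on `HeredHN` then gives accessibility for `≻`, since head
reduction is deterministic and a head normal form has no head redex. As `≻` renames the argument
it passes to, the induction is carried out for all renamings of a term at once.
-/

section

variable {F : Type}

open Tm Relation

theorem lift_lift_of_le (t : Tm F) {e d : ℕ} (h : e ≤ d) :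
    lift e (lift d t) = lift (d + 1) (lift e t) := by
  induction t generalizing e d with
  | const f => rfl
  | var n => grind [lift]
  | app s t ihs iht => simp only [lift, ihs h, iht h]
  | lam s ih => simp only [lift, ih (Nat.succ_le_succ h)]

theorem subst_lift_self (t : Tm F) (j : ℕ) (u : Tm F) : subst (lift j t) j u = t := by
  induction t generalizing j u with
  | const f => rfl
  | var n => grind [lift, subst]
  | app s t ihs iht => simp only [lift, subst, ihs, iht]
  | lam s ih => simp only [lift, subst, ih]

theorem lift_subst_above (t : Tm F) {k d : ℕ} (b : Tm F) (h : k ≤ d) :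
    lift d (subst t k b) = subst (lift (d + 1) t) k (lift d b) := by
  induction t generalizing k d b with
  | const f => rfl
  | var n => grind [lift, subst]
  | app s t ihs iht => simp only [lift, subst, ihs b h, iht b h]
  | lam s ih =>
    simp only [lift, subst, ih (lift 0 b) (Nat.succ_le_succ h), lift_lift_of_le b (Nat.zero_le d)]

theorem lift_subst_below (t : Tm F) {e k : ℕ} (b : Tm F) (h : e ≤ k) :
    lift e (subst t k b) = subst (lift e t) (k + 1) (lift e b) := by
  induction t generalizing e k b with
  | const f => rfl
  | var n => grind [lift, subst]
  | app s t ihs iht => simp only [lift, subst, ihs b h, iht b h]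
  | lam s ih =>
    simp only [lift, subst, ih (lift 0 b) (Nat.succ_le_succ h), lift_lift_of_le b (Nat.zero_le e)]

theorem subst_subst_of_le (p : Tm F) {j k : ℕ} (q b : Tm F) (h : j ≤ k) :
    subst (subst p j q) k b = subst (subst p (k + 1) (lift j b)) j (subst q k b) := by
  induction p generalizing j k q b with
  | const f => rfl
  | var n => grind [subst, subst_lift_self]
  | app s t ihs iht => simp only [subst, ihs q b h, iht q b h]
  | lam s ih =>
    simp only [subst, ih (lift 0 q) (lift 0 b) (Nat.succ_le_succ h),
      lift_lift_of_le b (Nat.zero_le j), lift_subst_below q b (Nat.zero_le k)]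

def ren (ρ : ℕ → ℕ) (t : Tm F) : Tm F := applySubst (fun n => var (ρ n)) t

/-- The renaming `ρ` acting under `k` binders. -/
def liftRen (k : ℕ) (ρ : ℕ → ℕ) (n : ℕ) : ℕ := if n < k then n else ρ (n - k) + k

theorem liftRen_zero (ρ : ℕ → ℕ) : liftRen 0 ρ = ρ := by
  funext n; simp [liftRen]

theorem liftRen_one_liftRen (k : ℕ) (ρ : ℕ → ℕ) :
    liftRen 1 (liftRen k ρ) = liftRen (k + 1) ρ := by
  funext n; grind [liftRen]

theorem liftRen_one_comp (ρ₁ ρ₂ : ℕ → ℕ) :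
    liftRen 1 ρ₂ ∘ liftRen 1 ρ₁ = liftRen 1 (ρ₂ ∘ ρ₁) := by
  funext n; grind [liftRen]

theorem ren_const (ρ : ℕ → ℕ) (f : F) : ren ρ (const f) = const f := rfl
theorem ren_var (ρ : ℕ → ℕ) (n : ℕ) : ren ρ (var n : Tm F) = var (ρ n) := rfl
theorem ren_app (ρ : ℕ → ℕ) (s t : Tm F) : ren ρ (app s t) = app (ren ρ s) (ren ρ t) := rfl

theorem ren_lam (ρ : ℕ → ℕ) (c : Tm F) : ren ρ (lam c) = lam (ren (liftRen 1 ρ) c) := by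
  have hσ : (fun n => match n with
      | 0 => var 0
      | m + 1 => lift 0 (var (ρ m) : Tm F)) = fun n => var (liftRen 1 ρ n) := by
    funext n; cases n <;> simp [lift, liftRen]
  simp only [ren, applySubst, hσ]

theorem ren_ren (x : Tm F) (ρ₁ ρ₂ : ℕ → ℕ) : ren ρ₂ (ren ρ₁ x) = ren (ρ₂ ∘ ρ₁) x := by
  induction x generalizing ρ₁ ρ₂ with
  | const f => rfl
  | var n => rfl
  | app s t ihs iht => simp only [ren_app, ihs, iht]
  | lam c ih => simp only [ren_lam, ih, liftRen_one_comp]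

theorem ren_id (x : Tm F) : ren id x = x := by
  have hid : liftRen 1 id = id := by funext n; grind [liftRen]
  induction x with
  | const f => rfl
  | var n => rfl
  | app s t ihs iht => simp only [ren_app, ihs, iht]
  | lam c ih => simp only [ren_lam, hid, ih]

theorem ren_lift (q : Tm F) (ρ : ℕ → ℕ) {k j : ℕ} (h : j ≤ k) :
    ren (liftRen (k + 1) ρ) (lift j q) = lift j (ren (liftRen k ρ) q) := by
  induction q generalizing k j with
  | const f => rfl
  | var n => grind [lift, liftRen, ren_var]
  | app s t ihs iht => simp only [lift, ren_app, ihs h, iht h]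
  | lam s ih => simp only [lift, ren_lam, liftRen_one_liftRen, ih (Nat.succ_le_succ h)]

theorem ren_subst (p : Tm F) (ρ : ℕ → ℕ) (k : ℕ) (q : Tm F) :
    ren (liftRen k ρ) (subst p k q) =
      subst (ren (liftRen (k + 1) ρ) p) k (ren (liftRen k ρ) q) := by
  induction p generalizing k q with
  | const f => rfl
  | var n => grind [subst, liftRen, ren_var]
  | app s t ihs iht => simp only [subst, ren_app, ihs, iht]
  | lam s ih =>
    simp only [subst, ren_lam, liftRen_one_liftRen, ih, ren_lift q ρ (Nat.zero_le k)]

theorem ren_subst_zero (p : Tm F) (ρ : ℕ → ℕ) (q : Tm F) :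
    ren ρ (subst p 0 q) = subst (ren (liftRen 1 ρ) p) 0 (ren ρ q) := by
  simpa only [liftRen_zero] using ren_subst p ρ 0 q

def NotLam (s : Tm F) : Prop := ∀ b : Tm F, s ≠ lam b

/-- Head normal form `λx⃗. v a₀ … aₙ` with `v` a variable or a constant; `Args` lists the
`aᵢ`. -/
def IsHNF (s : Tm F) : Prop :=
  (∃ n : ℕ, spineHead (stripLam s) = var n) ∨ (∃ f : F, spineHead (stripLam s) = const f)

def Args (s : Tm F) : List (Tm F) := spineArgs (stripLam s)

theorem notLam_app (s t : Tm F) : NotLam (app s t) := fun _ => nofun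

theorem not_notLam {s : Tm F} : ¬ NotLam s ↔ ∃ c, s = lam c := by
  simp [NotLam]

theorem stripLam_of_notLam {s : Tm F} (h : NotLam s) : stripLam s = s := by
  cases s with
  | lam c => exact absurd rfl (h c)
  | _ => rfl

theorem isHNF_lam {c : Tm F} : IsHNF (lam c) ↔ IsHNF c := Iff.rfl

theorem args_lam (c : Tm F) : Args (lam c) = Args c := rfl

theorem isHNF_app {s : Tm F} (t : Tm F) (h : NotLam s) : IsHNF (app s t) ↔ IsHNF s := by
  simp only [IsHNF, stripLam, spineHead, stripLam_of_notLam h]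

theorem args_app {s : Tm F} (t : Tm F) (h : NotLam s) : Args (app s t) = Args s ++ [t] := by
  simp only [Args, stripLam, spineArgs, stripLam_of_notLam h]

theorem spineHead_ren (x : Tm F) (ρ : ℕ → ℕ) : spineHead (ren ρ x) = ren ρ (spineHead x) := by
  induction x with
  | app s t ihs _ => simp only [ren_app, spineHead, ihs]
  | _ => rfl

theorem spineArgs_ren (x : Tm F) (ρ : ℕ → ℕ) :
    spineArgs (ren ρ x) = (spineArgs x).map (ren ρ) := by
  induction x with
  | app s t ihs _ => simp only [ren_app, spineArgs, ihs, List.map_append, List.map_singleton]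
  | _ => rfl

theorem exists_stripLam_ren (x : Tm F) (ρ : ℕ → ℕ) :
    ∃ ρ', stripLam (ren ρ x) = ren ρ' (stripLam x) := by
  induction x generalizing ρ with
  | lam c ih => simpa only [ren_lam, stripLam] using ih (liftRen 1 ρ)
  | _ => exact ⟨ρ, rfl⟩

theorem IsHNF.ren {s : Tm F} (h : IsHNF s) (ρ : ℕ → ℕ) : IsHNF (ren ρ s) := by
  obtain ⟨ρ', hρ'⟩ := exists_stripLam_ren s ρ
  rcases h with ⟨n, hn⟩ | ⟨f, hf⟩
  · exact .inl ⟨ρ' n, by rw [hρ', spineHead_ren, hn, ren_var]⟩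
  · exact .inr ⟨f, by rw [hρ', spineHead_ren, hf, ren_const]⟩

theorem exists_args_ren (s : Tm F) (ρ : ℕ → ℕ) : ∃ ρ', Args (ren ρ s) = (Args s).map (ren ρ') := by
  obtain ⟨ρ', hρ'⟩ := exists_stripLam_ren s ρ
  exact ⟨ρ', by rw [Args, hρ', spineArgs_ren, Args]⟩

theorem Head.exists_app {s t : Tm F} (h : Head s t) (hs : NotLam s) : ∃ a b, s = Tm.app a b := by
  cases h with
  | lam _ => exact absurd rfl (hs _)
  | _ => exact ⟨_, _, rfl⟩

theorem Head.notLam_subst {s t : Tm F} (h : Head s t) (hs : NotLam s) (k : ℕ) (u : Tm F) :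
    NotLam (subst s k u) := by
  obtain ⟨a, b, rfl⟩ := h.exists_app hs
  exact notLam_app _ _

theorem Head.subst {s t : Tm F} (h : Head s t) (k : ℕ) (u : Tm F) :
    Head (subst s k u) (subst t k u) := by
  induction h generalizing k u with
  | beta s t =>
    rw [subst_subst_of_le s t u (Nat.zero_le k)]
    exact .beta _ _
  | app t h hs ih => exact .app _ (ih k u) (h.notLam_subst hs k u)
  | lam _ ih => exact .lam (ih (k + 1) (lift 0 u))

theorem Head.ren {s t : Tm F} (h : Head s t) (ρ : ℕ → ℕ) : Head (ren ρ s) (ren ρ t) := by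
  induction h generalizing ρ with
  | beta s t =>
    rw [ren_subst_zero, ren_app, ren_lam]
    exact .beta _ _
  | app t h hs ih =>
    obtain ⟨a, b, rfl⟩ := h.exists_app hs
    exact .app _ (ih ρ) (notLam_app _ _)
  | lam _ ih => simpa only [ren_lam] using .lam (ih (liftRen 1 ρ))

theorem Head.det {s t u : Tm F} (h₁ : Head s t) (h₂ : Head s u) : t = u := by
  induction h₁ generalizing u with
  | beta a b =>
    cases h₂ with
    | beta => rfl
    | app _ _ hs => exact absurd rfl (hs a)
  | app t _ hs ih =>
    cases h₂ with
    | beta a b => exact absurd rfl (hs a)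
    | app _ h₂ _ => rw [ih h₂]
  | lam _ ih =>
    cases h₂ with
    | lam h₂ => rw [ih h₂]

theorem Head.not_isHNF {s t : Tm F} (h : Head s t) : ¬ IsHNF s := by
  induction h with
  | beta a b => rintro (⟨_, h⟩ | ⟨_, h⟩) <;> cases h
  | app t h hs ih =>
    obtain ⟨a, b, rfl⟩ := h.exists_app hs
    rwa [isHNF_app t hs]
  | lam _ ih => rwa [isHNF_lam]

theorem Head.toBeta {s t : Tm F} (h : Head s t) : Beta s t := by
  induction h with
  | beta s t => exact .beta s t
  | app t _ _ ih => exact .appL t ih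
  | lam _ ih => exact .lam ih

theorem PB.lift {s t : Tm F} (h : PB s t) (d : ℕ) : PB (Tm.lift d s) (Tm.lift d t) := by
  induction h generalizing d with
  | refl t => exact .refl _
  | lam _ ih => exact .lam (ih (d + 1))
  | app _ _ ih₁ ih₂ => exact .app (ih₁ d) (ih₂ d)
  | @beta s s' t t' _ _ ih₁ ih₂ =>
    rw [lift_subst_above s' t' (Nat.zero_le d)]
    exact .beta (ih₁ (d + 1)) (ih₂ d)

theorem PB.subst_arg (a : Tm F) (k : ℕ) {b b' : Tm F} (h : PB b b') :
    PB (Tm.subst a k b) (Tm.subst a k b') := by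
  induction a generalizing k b b' with
  | const f => exact .refl _
  | var n => simp only [Tm.subst]; split_ifs <;> first | exact h | exact .refl _
  | app s t ihs iht => exact .app (ihs k h) (iht k h)
  | lam s ih => exact .lam (ih (k + 1) (h.lift 0))

theorem PB.subst {a a' : Tm F} (ha : PB a a') (k : ℕ) {b b' : Tm F} (hb : PB b b') :
    PB (Tm.subst a k b) (Tm.subst a' k b') := by
  induction ha generalizing k b b' with
  | refl t => exact PB.subst_arg t k hb
  | lam _ ih => exact .lam (ih (k + 1) (hb.lift 0))
  | app _ _ ih₁ ih₂ => exact .app (ih₁ k hb) (ih₂ k hb)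
  | @beta s s' t t' _ _ ih₁ ih₂ =>
    rw [subst_subst_of_le s' t' b' (Nat.zero_le k)]
    exact .beta (ih₁ (k + 1) (hb.lift 0)) (ih₂ k hb)

theorem Beta.toPB {s t : Tm F} (h : Beta s t) : PB s t := by
  induction h with
  | beta s t => exact .beta (.refl s) (.refl t)
  | appL t _ ih => exact .app ih (.refl t)
  | appR s _ ih => exact .app (.refl s) ih
  | lam _ ih => exact .lam ih

/-- A head step that remains one in applicative position, see `appHeadStar_app`. -/
def AppHead (s t : Tm F) : Prop := Head s t ∧ NotLam s

theorem appHeadStar_toHeadStar {s t : Tm F} (h : ReflTransGen AppHead s t) :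
    ReflTransGen Head s t :=
  ReflTransGen.mono (fun _ _ h => h.1) _ _ h

theorem appHeadStar_app {s t : Tm F} (u : Tm F) (h : ReflTransGen AppHead s t) :
    ReflTransGen AppHead (app s u) (app t u) :=
  h.lift (fun x => app x u) fun _ _ h => ⟨.app u h.1 h.2, notLam_app _ _⟩

theorem appHeadStar_subst {s t : Tm F} (k : ℕ) (u : Tm F) (h : ReflTransGen AppHead s t) :
    ReflTransGen AppHead (subst s k u) (subst t k u) :=
  h.lift (fun x => subst x k u) fun _ _ h => ⟨h.1.subst k u, h.1.notLam_subst h.2 k u⟩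

theorem headStar_lam {s t : Tm F} (h : ReflTransGen Head s t) :
    ReflTransGen Head (lam s) (lam t) :=
  h.lift lam fun _ _ => .lam

/-- Parallel reduction contracting no redex on the application spine; below a leading
abstraction it is unrestricted. -/
inductive InternalPB : Tm F → Tm F → Prop
  | var (n : ℕ) : InternalPB (var n) (var n)
  | const (f : F) : InternalPB (const f) (const f)
  | lam {s s'} : PB s s' → InternalPB (lam s) (lam s')
  | app {s s' t t'} : InternalPB s s' → NotLam s → PB t t' → InternalPB (app s t) (app s' t')
  | appRedex {c c' t t'} : PB c c' → PB t t' →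
      InternalPB (app (lam c) t) (app (lam c') t')

namespace InternalPB

theorem refl : ∀ t : Tm F, InternalPB t t
  | .var n => .var n
  | .const f => .const f
  | .lam s => .lam (.refl s)
  | .app (.lam c) t => .appRedex (.refl c) (.refl t)
  | .app (.var _) t => .app (refl _) (fun _ => nofun) (.refl t)
  | .app (.const _) t => .app (refl _) (fun _ => nofun) (.refl t)
  | .app (.app _ _) t => .app (refl _) (fun _ => nofun) (.refl t)

theorem notLam {s s' : Tm F} (h : InternalPB s s') (hs : NotLam s) : NotLam s' := by
  cases h with
  | lam _ => exact absurd rfl (hs _)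
  | app _ _ _ | appRedex _ _ => exact notLam_app _ _
  | _ => exact hs

theorem lam_inv {c x : Tm F} (h : InternalPB (Tm.lam c) x) : ∃ c', x = Tm.lam c' ∧ PB c c' := by
  cases h with
  | lam h => exact ⟨_, rfl, h⟩

end InternalPB

theorem exists_appHeadStar_internalPB_app {a a₀ a' b b' : Tm F} (ha : ReflTransGen AppHead a a₀)
    (ha₀ : InternalPB a₀ a') (hb : PB b b') :
    ∃ w, ReflTransGen AppHead (app a b) w ∧ InternalPB w (app a' b') := by
  by_cases hl : NotLam a₀
  · exact ⟨_, appHeadStar_app b ha, .app ha₀ hl hb⟩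
  · obtain ⟨c₀, rfl⟩ : ∃ c₀, a₀ = lam c₀ := by simpa [NotLam] using hl
    obtain ⟨c', rfl, hc⟩ := ha₀.lam_inv
    exact ⟨_, appHeadStar_app b ha, .appRedex hc hb⟩

theorem InternalPB.subst {p p' : Tm F} (h : InternalPB p p') (k : ℕ) {q q' q₀ : Tm F}
    (hq : PB q q') (hq₀ : ReflTransGen AppHead q q₀) (hq₀' : InternalPB q₀ q') :
    ∃ w, ReflTransGen AppHead (Tm.subst p k q) w ∧ InternalPB w (Tm.subst p' k q') := by
  induction h with
  | var n =>
    by_cases hn : n = k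
    · subst hn; simpa only [Tm.subst, if_pos] using ⟨q₀, hq₀, hq₀'⟩
    · exact ⟨_, .refl, by simpa only [Tm.subst, if_neg hn] using InternalPB.refl _⟩
  | const f => exact ⟨_, .refl, .const f⟩
  | lam h => exact ⟨_, .refl, .lam (h.subst (k + 1) (hq.lift 0))⟩
  | app _ _ hb ih =>
    obtain ⟨w, hw, hw'⟩ := ih
    exact exists_appHeadStar_internalPB_app hw hw' (hb.subst k hq)
  | appRedex hc ht => exact ⟨_, .refl, .appRedex (hc.subst (k + 1) (hq.lift 0)) (ht.subst k hq)⟩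

theorem PB.decompose {s t : Tm F} (h : PB s t) :
    ∃ u, ReflTransGen AppHead s u ∧ InternalPB u t := by
  induction h with
  | refl t => exact ⟨t, .refl, .refl t⟩
  | lam h => exact ⟨_, .refl, .lam h⟩
  | app _ hb ih =>
    obtain ⟨u, hu, hu'⟩ := ih
    exact exists_appHeadStar_internalPB_app hu hu' hb
  | @beta p p' q q' _ hq ihp ihq =>
    obtain ⟨p₀, hp₀, hp₀'⟩ := ihp
    obtain ⟨q₀, hq₀, hq₀'⟩ := ihq
    obtain ⟨w, hw, hw'⟩ := hp₀'.subst 0 hq hq₀ hq₀'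
    exact ⟨w, .head ⟨.beta p q, notLam_app _ _⟩ ((appHeadStar_subst 0 q hp₀).trans hw), hw'⟩

theorem InternalPB.head_commute {s t t₁ : Tm F} (h : InternalPB s t) (hs : NotLam s)
    (ht : Head t t₁) : ∃ s₁, ReflTransGen AppHead s s₁ ∧ PB s₁ t₁ := by
  induction h generalizing t₁ with
  | var _ | const _ => cases ht
  | lam _ => exact absurd rfl (hs _)
  | app ha ha_nl hb ih =>
    cases ht with
    | beta => exact absurd rfl (ha.notLam ha_nl _)
    | app _ ht _ =>
      obtain ⟨s₁, hs₁, hs₁'⟩ := ih ha_nl ht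
      exact ⟨_, appHeadStar_app _ hs₁, .app hs₁' hb⟩
  | @appRedex c _ d _ hc hd =>
    cases ht with
    | beta => exact ⟨_, .single ⟨.beta c d, notLam_app _ _⟩, hc.subst 0 hd⟩
    | app _ _ ht_nl => exact absurd rfl (ht_nl _)

theorem InternalPB.isHNF {s u : Tm F} (h : InternalPB s u) (hs : NotLam s) (hu : IsHNF u) :
    IsHNF s ∧ ∀ b ∈ Args s, ∃ c ∈ Args u, PB b c := by
  induction h with
  | var _ | const _ => exact ⟨hu, fun _ => nofun⟩
  | lam _ => exact absurd rfl (hs _)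
  | @app a a' b b' ha ha_nl hb ih =>
    have ha'_nl := ha.notLam ha_nl
    obtain ⟨ha_hnf, ha_args⟩ := ih ha_nl ((isHNF_app b' ha'_nl).mp hu)
    refine ⟨(isHNF_app b ha_nl).mpr ha_hnf, ?_⟩
    rw [args_app b ha_nl, args_app b' ha'_nl]
    simp only [List.mem_append, List.mem_singleton]
    rintro x (hx | rfl)
    · obtain ⟨c, hc, hxc⟩ := ha_args x hx
      exact ⟨c, .inl hc, hxc⟩
    · exact ⟨b', .inr rfl, hb⟩
  | appRedex _ _ => rcases hu with ⟨_, h⟩ | ⟨_, h⟩ <;> cases h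

theorem PB.head_commute {s t t₁ : Tm F} (h : PB s t) (ht : Head t t₁) :
    ∃ s₁, ReflTransGen Head s s₁ ∧ PB s₁ t₁ := by
  obtain ⟨s₀, hs₀, hs₀'⟩ := h.decompose
  by_cases hl : NotLam s₀
  · obtain ⟨s₁, hs₁, hs₁'⟩ := hs₀'.head_commute hl ht
    exact ⟨s₁, appHeadStar_toHeadStar (hs₀.trans hs₁), hs₁'⟩
  · obtain ⟨c₀, rfl⟩ := not_notLam.mp hl
    obtain ⟨c', rfl, hc⟩ := hs₀'.lam_inv
    cases ht with
    | lam ht =>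
      obtain ⟨s₁, hs₁, hs₁'⟩ := hc.head_commute ht
      exact ⟨_, (appHeadStar_toHeadStar hs₀).trans (headStar_lam hs₁), .lam hs₁'⟩
termination_by t

theorem PB.exists_isHNF {s t : Tm F} (h : PB s t) (ht : IsHNF t) :
    ∃ w, ReflTransGen Head s w ∧ IsHNF w ∧ ∀ b ∈ Args w, ∃ c ∈ Args t, PB b c := by
  obtain ⟨s₀, hs₀, hs₀'⟩ := h.decompose
  by_cases hl : NotLam s₀
  · exact ⟨s₀, appHeadStar_toHeadStar hs₀, hs₀'.isHNF hl ht⟩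
  · obtain ⟨c₀, rfl⟩ := not_notLam.mp hl
    obtain ⟨c', rfl, hc⟩ := hs₀'.lam_inv
    obtain ⟨w, hw, hw_hnf, hw_args⟩ := hc.exists_isHNF (isHNF_lam.mp ht)
    exact ⟨_, (appHeadStar_toHeadStar hs₀).trans (headStar_lam hw), isHNF_lam.mpr hw_hnf,
      by simpa only [args_lam] using hw_args⟩
termination_by t

/-- Induction on this predicate replaces the lexicographic measure (number of head steps, size)
of the informal proof. -/
inductive HeredHN : Tm F → Prop
  | hnf {s : Tm F} : IsHNF s → (∀ a ∈ Args s, HeredHN a) → HeredHN s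
  | head {s t : Tm F} : Head s t → HeredHN t → HeredHN s

namespace HeredHN

theorem of_headStar {s t : Tm F} (h : ReflTransGen Head s t) (ht : HeredHN t) : HeredHN s := by
  induction h using ReflTransGen.head_induction_on with
  | refl => exact ht
  | head hst _ ih => exact .head hst ih

theorem of_pb {s t : Tm F} (ht : HeredHN t) (h : PB s t) : HeredHN s := by
  induction ht generalizing s with
  | hnf ht_hnf _ ih =>
    obtain ⟨w, hw, hw_hnf, hw_args⟩ := h.exists_isHNF ht_hnf
    refine of_headStar hw (.hnf hw_hnf fun b hb => ?_)
    obtain ⟨c, hc, hbc⟩ := hw_args b hb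
    exact ih c hc hbc
  | head ht _ ih =>
    obtain ⟨s₁, hs₁, hs₁'⟩ := h.head_commute ht
    exact of_headStar hs₁ (ih hs₁')

theorem of_betaStar {s t : Tm F} (h : ReflTransGen Beta s t) (ht : HeredHN t) : HeredHN s := by
  induction h using ReflTransGen.head_induction_on with
  | refl => exact ht
  | head hst _ ih => exact ih.of_pb hst.toPB

theorem lam {c : Tm F} (h : HeredHN c) : HeredHN (Tm.lam c) := by
  induction h with
  | hnf hc hargs _ => exact .hnf (isHNF_lam.mpr hc) hargs
  | head hc _ ih => exact .head (.lam hc) ih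

end HeredHN

theorem BetaNF.heredHN {t : Tm F} (h : BetaNF t) : HeredHN t := by
  induction t with
  | const f => exact .hnf (.inr ⟨f, rfl⟩) fun _ => nofun
  | var n => exact .hnf (.inl ⟨n, rfl⟩) fun _ => nofun
  | lam c ih => exact (ih fun u hu => h _ (.lam hu)).lam
  | app a b iha ihb =>
    have ha : BetaNF a := fun u hu => h _ (.appL b hu)
    have ha_nl : NotLam a := by rintro c rfl; exact h _ (.beta c b)
    cases iha ha with
    | hnf ha_hnf ha_args =>
      refine .hnf ((isHNF_app b ha_nl).mpr ha_hnf) ?_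
      rw [args_app b ha_nl]
      simp only [List.mem_append, List.mem_singleton]
      rintro x (hx | rfl)
      · exact ha_args x hx
      · exact ihb fun u hu => h _ (.appR a hu)
    | head hh _ => exact absurd hh.toBeta (ha _)

theorem WN.heredHN {s : Tm F} (h : WN s) : HeredHN s :=
  let ⟨_, hst, ht⟩ := h
  .of_betaStar hst ht.heredHN

theorem HeredHN.acc_ren {s : Tm F} (h : HeredHN s) (ρ : ℕ → ℕ) :
    Acc (fun t s : Tm F => Succ s t) (ren ρ s) := by
  induction h generalizing ρ with
  | @hnf s hs _ ih =>
    refine ⟨_, fun t hst => ?_⟩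
    cases hst with
    | head hh => exact absurd (hs.ren ρ) hh.not_isHNF
    | arg _ hmem _ hren =>
      obtain ⟨ρ', hρ'⟩ := exists_args_ren s ρ
      rw [← Args, hρ'] at hmem
      obtain ⟨b, hb, rfl⟩ := List.mem_map.mp hmem
      obtain ⟨ρ₂, rfl⟩ := hren
      change Acc _ (ren ρ₂ (ren ρ' b))
      rw [ren_ren]
      exact ih b hb _
  | head hst _ ih =>
    refine ⟨_, fun t hst' => ?_⟩
    cases hst' with
    | head hh => rw [hh.det (hst.ren ρ)]; exact ih ρ
    | arg hhnf _ _ _ => exact absurd hhnf (hst.ren ρ).not_isHNF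

theorem HeredHN.acc {s : Tm F} (h : HeredHN s) : Acc (fun t s : Tm F => Succ s t) s := by
  simpa only [ren_id] using h.acc_ren id

end

/-- `≻` is well-founded on the set of weakly beta-normalizing
terms. -/
theorem succ_wellFounded {F : Type} :
    Set.WellFoundedOn {s : Tm F | WN s} (fun t s => Succ s t) :=
  ⟨fun s => InvImage.accessible Subtype.val s.2.heredHN.acc⟩

end CondConf
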